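/- arXiv:2403.17583 — 5 statements merged into one kernel-verified Lean document; each statement's English description precedes it below -/
import Mathlib

section
/- For real β > 0, ∫_{-π}^{π} (cosh(β(π - |θ|)) / (2β sinh(πβ)))² dθ = π/(4β² sinh²(πβ)) + cosh(πβ)/(4β³ sinh(πβ)). -/
open Real MeasureTheory

namespace intervalIntegral

variable {E : Type*} [NormedAddCommGroup E] [NormedSpace ℝ E]

theorem integral_symm_eq_two_smul_of_even {g : ℝ → E} (hg : Function.Even g) {a : ℝ}
    (hint : IntervalIntegrable g volume 0 a) :
    ∫ x in -a..a, g x = (2 : ℝ) • ∫ x in 0..a, g x := by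
  have hint_neg : IntervalIntegrable g volume (-a) 0 := by
    simpa [hg _] using ((IntervalIntegrable.iff_comp_neg).mp hint).symm
  have hleft : ∫ x in -a..0, g x = ∫ x in 0..a, g x := by
    simpa [hg _] using (integral_comp_neg (a := 0) (b := a) g).symm
  rw [← integral_add_adjacent_intervals hint_neg hint, hleft, two_smul]

theorem integral_comp_abs_symm {f : ℝ → E} {a : ℝ} (ha : 0 ≤ a)
    (hf : IntervalIntegrable f volume 0 a) :
    ∫ x in -a..a, f |x| = (2 : ℝ) • ∫ x in 0..a, f x := by
  have habs : Set.EqOn (fun x ↦ f |x|) f (Set.uIcc 0 a) := fun x hx ↦ by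
    rw [Set.uIcc_of_le ha] at hx
    simp only [abs_of_nonneg hx.1]
  rw [integral_symm_eq_two_smul_of_even (fun x ↦ by simp only [abs_neg])
      ((intervalIntegrable_congr (habs.mono Set.uIoc_subset_uIcc)).mpr hf),
    integral_congr habs]

end intervalIntegral

theorem integral_cosh_mul_sq {c : ℝ} (hc : c ≠ 0) (a : ℝ) :
    ∫ x in (0 : ℝ)..a, cosh (c * x) ^ 2 = a / 2 + sinh (2 * c * a) / (4 * c) := by
  have hderiv : ∀ x, HasDerivAt (fun x ↦ x / 2 + sinh (2 * c * x) / (4 * c))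
      (cosh (c * x) ^ 2) x := fun x ↦ by
    have hlin : HasDerivAt (fun x ↦ 2 * c * x) (2 * c) x := by
      simpa using (hasDerivAt_id' x).const_mul (2 * c)
    refine (((hasDerivAt_id' x).div_const 2).add (hlin.sinh.div_const (4 * c))).congr_deriv ?_
    rw [show 2 * c * x = 2 * (c * x) by ring, cosh_two_mul, sinh_sq]
    field_simp
    ring
  rw [intervalIntegral.integral_eq_sub_of_hasDerivAt (fun x _ ↦ hderiv x)
    ((by fun_prop : Continuous _).intervalIntegrable _ _)]
  simp

/-- For `β > 0`,
`∫_{-π}^{π} (cosh(β(π-|θ|))/(2β sinh(πβ)))² dθ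
  = π/(4β² sinh²(πβ)) + cosh(πβ)/(4β³ sinh(πβ))`. -/
theorem circle_self_energy_density (β : ℝ) (hβ : 0 < β) :
    (∫ θ in (-Real.pi)..Real.pi,
        (Real.cosh (β * (Real.pi - |θ|)) / (2 * β * Real.sinh (Real.pi * β))) ^ 2)
      = Real.pi / (4 * β ^ 2 * Real.sinh (Real.pi * β) ^ 2)
        + Real.cosh (Real.pi * β) / (4 * β ^ 3 * Real.sinh (Real.pi * β)) := by
  have hsinh : sinh (π * β) ≠ 0 := (sinh_pos_iff.mpr (by positivity)).ne'
  calc (∫ θ in -π..π, (cosh (β * (π - |θ|)) / (2 * β * sinh (π * β))) ^ 2)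
      = (∫ θ in -π..π, cosh (β * (π - |θ|)) ^ 2) / (2 * β * sinh (π * β)) ^ 2 := by
        simp_rw [div_pow, intervalIntegral.integral_div]
    _ = 2 * (∫ θ in (0 : ℝ)..π, cosh (β * (π - θ)) ^ 2) / (2 * β * sinh (π * β)) ^ 2 := by
        rw [intervalIntegral.integral_comp_abs_symm (f := fun θ ↦ cosh (β * (π - θ)) ^ 2)
          pi_pos.le ((by fun_prop : Continuous _).intervalIntegrable _ _), smul_eq_mul]
    _ = 2 * (∫ θ in (0 : ℝ)..π, cosh (β * θ) ^ 2) / (2 * β * sinh (π * β)) ^ 2 := by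
        rw [intervalIntegral.integral_comp_sub_left (fun θ ↦ cosh (β * θ) ^ 2), sub_self,
          sub_zero]
    _ = 2 * (π / 2 + sinh (2 * (π * β)) / (4 * β)) / (2 * β * sinh (π * β)) ^ 2 := by
        rw [integral_cosh_mul_sq hβ.ne', mul_assoc, mul_comm β π]
    _ = π / (4 * β ^ 2 * sinh (π * β) ^ 2) + cosh (π * β) / (4 * β ^ 3 * sinh (π * β)) := by
        rw [sinh_two_mul]
        field_simp
        ring
end

section
/- For every real t that is not a half-integer with t > 0, and for ε > 0 sufficiently small, the equation -(1/(2t)) cot(πt) = ε has, for each l ∈ ℕ, a unique solution t_l(ε) near l + 1/2 with t_l(ε) = l + 1/2 + ((2l+1)/π) ε + O(ε²); moreover for ε real the solution lies in the interval (l, l+1). -/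
open Real

private lemma tan_sub_le_aux (y : ℝ) (h0 : 0 ≤ y) (h2 : y < π/2) :
    Real.tan y - y ≤ y * Real.tan y ^ 2 := by
  have hc : 0 < Real.cos y := Real.cos_pos_of_mem_Ioo ⟨by linarith [Real.pi_pos], h2⟩
  have h1 : Real.sin y * Real.cos y ≤ y := by
    have hs := Real.sin_le (by linarith : (0:ℝ) ≤ 2*y)
    have h2y : Real.sin (2*y) = 2 * Real.sin y * Real.cos y := Real.sin_two_mul y
    linarith [h2y ▸ hs]
  have hpyth : Real.sin y ^ 2 + Real.cos y ^ 2 = 1 := Real.sin_sq_add_cos_sq y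
  rw [Real.tan_eq_sin_div_cos]
  rw [div_pow, div_sub' hc.ne', ← mul_div_assoc, div_le_div_iff₀ hc (by positivity)]
  nlinarith [mul_le_mul_of_nonneg_right h1 hc.le, mul_nonneg h0 hc.le, hpyth]

private lemma cos_pos_aux (s : ℝ) (hs : |s| < 1/2) : 0 < Real.cos (π * s) := by
  rw [abs_lt] at hs
  apply Real.cos_pos_of_mem_Ioo
  constructor
  · nlinarith [Real.pi_pos, hs.1]
  · nlinarith [Real.pi_pos, hs.2]

private lemma trig_id_aux (l : ℕ) (s : ℝ) :
    Real.sin (π * ((l:ℝ) + 1/2 + s)) = (-1:ℝ)^l * Real.cos (π * s) ∧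
    Real.cos (π * ((l:ℝ) + 1/2 + s)) = -((-1:ℝ)^l * Real.sin (π * s)) := by
  have h : π * ((l:ℝ) + 1/2 + s) = (π*s + π/2) + (l:ℝ)*π := by ring
  have hcl : Real.cos ((l:ℝ) * π) = (-1:ℝ)^l := by
    simpa using Real.cos_nat_mul_pi_sub 0 l
  have hsl : Real.sin ((l:ℝ) * π) = 0 := Real.sin_nat_mul_pi l
  constructor
  · rw [h, Real.sin_add, hcl, hsl, Real.sin_add_pi_div_two]; ring
  · rw [h, Real.cos_add, hcl, hsl, Real.cos_add_pi_div_two]; ring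

private lemma eqn_iff_aux (l : ℕ) (s t ε : ℝ) (ht : t = (l:ℝ)+1/2+s) (hs : |s| < 1/2)
    (ht0 : 0 < t) :
    -(Real.cos (π * t) / Real.sin (π * t)) / (2*t) = ε ↔ Real.tan (π*s) = 2*t*ε := by
  obtain ⟨h1, h2⟩ := trig_id_aux l s
  have hc : Real.cos (π*s) ≠ 0 := (cos_pos_aux s hs).ne'
  have hpow : ((-1:ℝ)^l) ≠ 0 := pow_ne_zero _ (by norm_num)
  have hkey : -(Real.cos (π * t) / Real.sin (π * t)) = Real.tan (π*s) := by
    rw [ht, h1, h2, Real.tan_eq_sin_div_cos]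
    field_simp
  rw [hkey, div_eq_iff (by positivity : (2*t) ≠ 0)]
  constructor <;> intro h <;> linarith

set_option maxHeartbeats 1000000 in
/-- For each `l ∈ ℕ` and all sufficiently small `ε > 0`, the equation
`-(1/(2t)) cot(πt) = ε` has a unique solution `t` near `l + 1/2`, with
`t = l + 1/2 + ((2l+1)/π) ε + O(ε²)`; moreover the solution lies in `(l, l+1)`. -/
theorem shifted_eigenvalue_dim1 :
    ∀ l : ℕ, ∃ C > 0, ∃ ε₀ > 0, ∀ ε : ℝ, 0 < ε → ε < ε₀ →
      ∃! t : ℝ, |t - ((l : ℝ) + 1 / 2)| < 1 / 2 ∧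
        -(Real.cos (Real.pi * t) / Real.sin (Real.pi * t)) / (2 * t) = ε ∧
        |t - ((l : ℝ) + 1 / 2 + ((2 * (l : ℝ) + 1) / Real.pi) * ε)| ≤ C * ε ^ 2 ∧
        (l : ℝ) < t ∧ t < (l : ℝ) + 1 := by
  intro l
  have hl0 : (0:ℝ) ≤ (l:ℝ) := Nat.cast_nonneg l
  set a : ℝ := 2*(l:ℝ)+1 with ha_def
  have ha1 : (1:ℝ) ≤ a := by simp only [ha_def]; linarith
  refine ⟨(2*(l:ℝ)+2)^3, by positivity, 1/(8*((l:ℝ)+1)), by positivity, ?_⟩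
  intro ε hε hε'
  have hε8 : ε < 1/8 := by
    refine lt_of_lt_of_le hε' ?_
    rw [div_le_div_iff₀ (by positivity) (by norm_num)]
    nlinarith
  have hε1 : ε ≤ 1 := by linarith
  -- the auxiliary function
  set F : ℝ → ℝ := fun s => Real.tan (π*s) - 2*ε*s with hF_def
  have hFderiv : ∀ s : ℝ, |s| < 1/2 →
      HasDerivAt F (π * (1/Real.cos (π*s)^2) - 2*ε) s := by
    intro s hs
    have hc : Real.cos (π*s) ≠ 0 := (cos_pos_aux s hs).ne'
    have h1 : HasDerivAt (fun u : ℝ => Real.tan (π*u)) (1/Real.cos (π*s)^2 * π) s := by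
      have hin : HasDerivAt (fun u : ℝ => π * u) π s := by
        simpa using (hasDerivAt_id s).const_mul π
      exact (Real.hasDerivAt_tan hc).comp s hin
    have h2 : HasDerivAt (fun u : ℝ => 2*ε*u) (2*ε) s := by
      simpa using (hasDerivAt_id s).const_mul (2*ε)
    have h3 := h1.sub h2
    have h4 : (1/Real.cos (π*s)^2 * π - 2*ε) = π * (1/Real.cos (π*s)^2) - 2*ε := by ring
    exact h4 ▸ h3
  -- strict monotonicity of F on (-1/2, 1/2)
  have hmono : StrictMonoOn F (Set.Ioo (-(1/2):ℝ) (1/2)) := by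
    apply strictMonoOn_of_deriv_pos (convex_Ioo _ _)
    · intro s hs
      exact (hFderiv s (abs_lt.2 ⟨hs.1, hs.2⟩)).continuousAt.continuousWithinAt
    · rw [interior_Ioo]
      intro s hs
      have habs : |s| < 1/2 := abs_lt.2 ⟨hs.1, hs.2⟩
      rw [(hFderiv s habs).deriv]
      have hc := cos_pos_aux s habs
      have hc1 : Real.cos (π*s)^2 ≤ 1 := Real.cos_sq_le_one _
      have hd : (1:ℝ) ≤ 1/Real.cos (π*s)^2 := by
        rw [le_div_iff₀ (by positivity)]; linarith
      nlinarith [Real.pi_gt_three]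
  -- existence via IVT
  set B : ℝ := 2*((l:ℝ)+1)*ε with hB_def
  have hB0 : 0 < B := by positivity
  have hB4 : B < 1/4 := by
    have := hε'
    rw [lt_div_iff₀ (by positivity)] at this
    simp only [hB_def]
    nlinarith
  have hBpi : π * B < π/2 := by nlinarith [Real.pi_pos]
  have hcont : ContinuousOn F (Set.Icc 0 B) := by
    intro s hs
    have habs : |s| < 1/2 := by
      rw [abs_lt]; constructor <;> [linarith [hs.1]; linarith [hs.2]]
    exact (hFderiv s habs).continuousAt.continuousWithinAt
  have hF0 : F 0 = 0 := by simp [hF_def]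
  have hFB : a*ε ≤ F B := by
    have htanB : π * B < Real.tan (π*B) := Real.lt_tan (by positivity) hBpi
    simp only [hF_def]
    have : a * ε ≤ π * B - 2*ε*B := by
      simp only [hB_def, ha_def]
      nlinarith [Real.pi_gt_three]
    linarith
  obtain ⟨s, hsmem, hFs⟩ := intermediate_value_Icc hB0.le hcont
    (by rw [hF0]; exact ⟨by positivity, hFB⟩ : a*ε ∈ Set.Icc (F 0) (F B))
  have hs0 : 0 < s := by
    rcases lt_or_eq_of_le hsmem.1 with h | h
    · exact h
    · exfalso; rw [← h] at hFs; rw [hF0] at hFs; nlinarith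
  have hsB : s ≤ B := hsmem.2
  have htan : Real.tan (π*s) = (a + 2*s)*ε := by
    simp only [hF_def] at hFs; linarith [hFs]
  -- bounds
  have hspi : π*s < π/2 := by nlinarith [Real.pi_pos]
  have hyletan : π*s < Real.tan (π*s) := Real.lt_tan (by positivity) hspi
  have hxub : (a + 2*s)*ε ≤ (a+1)*ε := by nlinarith
  have hs_small : π * s ≤ (a+1)*ε := by
    calc π*s ≤ Real.tan (π*s) := hyletan.le
    _ = (a+2*s)*ε := htan
    _ ≤ (a+1)*ε := hxub
  have h_up : π*s - a*ε ≤ (a+1)^3 * ε^2 := by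
    have h1 : π*s ≤ a*ε + 2*s*ε := by nlinarith [hyletan.le, htan]
    have h2 : s ≤ (a+1)*ε := by
      have h35 : 3*s ≤ π*s := mul_le_mul_of_nonneg_right (le_of_lt Real.pi_gt_three) hs0.le
      linarith
    have h2' : 2*s*ε ≤ 2*(a+1)*ε^2 := by nlinarith [mul_le_mul_of_nonneg_right h2 hε.le]
    have h3 : 2*(a+1) ≤ (a+1)^3 := by
      have h41 : 4 ≤ (a+1)^2 := by nlinarith
      nlinarith [mul_le_mul_of_nonneg_left h41 (by linarith : (0:ℝ) ≤ a+1)]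
    have h4 : (2*(a+1))*ε^2 ≤ (a+1)^3*ε^2 := mul_le_mul_of_nonneg_right h3 (sq_nonneg ε)
    linarith
  have h_lo : a*ε - π*s ≤ (a+1)^3 * ε^2 := by
    have htle := tan_sub_le_aux (π*s) (by positivity) hspi
    have htnn : 0 ≤ Real.tan (π*s) := by linarith [hyletan, mul_pos Real.pi_pos hs0]
    have h3 : Real.tan (π*s) - π*s ≤ Real.tan (π*s)^3 := by
      have := mul_le_mul_of_nonneg_right hyletan.le (sq_nonneg (Real.tan (π*s)))
      nlinarith [htle]
    have hle : Real.tan (π*s) ≤ (a+1)*ε := by rw [htan]; exact hxub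
    have h4 : Real.tan (π*s)^3 ≤ ((a+1)*ε)^3 := pow_le_pow_left₀ htnn hle 3
    have h5 : a*ε - π*s ≤ Real.tan (π*s) - π*s := by
      rw [htan]; nlinarith
    have h6 : ((a+1)*ε)^3 ≤ (a+1)^3 * ε^2 := by nlinarith [hε.le, sq_nonneg ((a+1)*ε)]
    linarith
  set t : ℝ := (l:ℝ) + 1/2 + s with ht_def
  have hsabs : |s| < 1/2 := by rw [abs_lt]; constructor <;> nlinarith
  have ht0 : 0 < t := by simp only [ht_def]; nlinarith
  have heq : -(Real.cos (π * t) / Real.sin (π * t)) / (2*t) = ε := by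
    rw [eqn_iff_aux l s t ε ht_def hsabs ht0, htan]
    simp only [ht_def, ha_def]; ring
  have hest : |t - ((l : ℝ) + 1 / 2 + ((2 * (l : ℝ) + 1) / π) * ε)| ≤ (2*(l:ℝ)+2)^3 * ε ^ 2 := by
    have hrw : t - ((l : ℝ) + 1 / 2 + ((2 * (l : ℝ) + 1) / π) * ε) = (π*s - a*ε)/π := by
      simp only [ht_def, ha_def]
      field_simp
      ring
    rw [hrw, abs_div, abs_of_pos Real.pi_pos]
    have habs1 : |π*s - a*ε| ≤ (a+1)^3 * ε^2 := abs_le.2 ⟨by linarith, by linarith⟩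
    have hπ1 : (1:ℝ) ≤ π := by linarith [Real.pi_gt_three]
    have : |π*s - a*ε| / π ≤ |π*s - a*ε| := div_le_self (abs_nonneg _) hπ1
    have hCC : (a+1)^3 = (2*(l:ℝ)+2)^3 := by rw [ha_def]; ring_nf
    linarith [hCC ▸ habs1]
  refine ⟨t, ⟨?_, heq, hest, ?_, ?_⟩, ?_⟩
  · simp only [ht_def]; rw [show (l:ℝ) + 1/2 + s - ((l:ℝ) + 1/2) = s by ring]; exact hsabs
  · simp only [ht_def]; nlinarith
  · simp only [ht_def]; nlinarith
  · -- uniqueness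
    rintro t' ⟨h1', h2', _, h4', _⟩
    set s' : ℝ := t' - ((l:ℝ)+1/2) with hs'_def
    have hs'abs : |s'| < 1/2 := h1'
    have ht'_eq : t' = (l:ℝ)+1/2+s' := by simp only [hs'_def]; ring
    have ht'0 : 0 < t' := by
      have := abs_lt.1 hs'abs
      simp only [hs'_def] at this
      nlinarith [this.1]
    have htan' : Real.tan (π*s') = 2*t'*ε :=
      (eqn_iff_aux l s' t' ε ht'_eq hs'abs ht'0).1 h2'
    have hFs' : F s' = a*ε := by
      simp only [hF_def]
      rw [htan', ht'_eq]
      simp only [ha_def]; ring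
    have hsmem' : s' ∈ Set.Ioo (-(1/2):ℝ) (1/2) := by
      have := abs_lt.1 hs'abs; exact ⟨this.1, this.2⟩
    have hsmemI : s ∈ Set.Ioo (-(1/2):ℝ) (1/2) := by
      have := abs_lt.1 hsabs; exact ⟨this.1, this.2⟩
    have : s' = s := hmono.injOn hsmem' hsmemI (by rw [hFs', hFs])
    simp only [ht_def]
    rw [ht'_eq, this]
end

section
/- Let f : (a, ∞) → ℂ be integrable on (a+1, ∞) and suppose f(r) - Σ_{k∈Ω} f_k (r-a)^k is integrable on (a, a+1) for a finite set Ω ⊂ ℂ with coefficients f_k. Then the value gen∫_a^∞ f := Σ_{k∈Ω, k≠-1} f_k/(k+1) + ∫_a^{a+1}(f(r) - Σ_{k∈Ω} f_k(r-a)^k) dr + ∫_{a+1}^∞ f(r) dr is independent of the choice of admissible pair (Ω, (f_k)). -/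
open Real MeasureTheory Finset


lemma aux_cpow_int_ne (ε : ℝ) (hε : 0 < ε) (hε1 : ε ≤ 1) (ν : ℂ) (hν : ν ≠ -1) :
    ∫ x in ε..1, (x:ℂ) ^ ν = (1 - (ε:ℂ) ^ (ν + 1)) / (ν + 1) := by
  have h0 : (0:ℝ) ∉ Set.uIcc ε 1 := by
    rw [Set.uIcc_of_le hε1]; rintro ⟨h, -⟩; linarith
  rw [integral_cpow (Or.inr ⟨hν, h0⟩)]; norm_num

lemma aux_cpow_int_neg_one (ε : ℝ) (hε : 0 < ε) (hε1 : ε ≤ 1) :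
    ∫ x in ε..1, (x:ℂ) ^ (-1 : ℂ) = (-(Real.log ε) : ℝ) := by
  have h0 : (0:ℝ) ∉ Set.uIcc ε 1 := by
    rw [Set.uIcc_of_le hε1]; rintro ⟨h, -⟩; linarith
  have : ∀ x : ℝ, (x:ℂ) ^ (-1 : ℂ) = ((x⁻¹ : ℝ) : ℂ) := by
    intro x; rw [Complex.cpow_neg_one, Complex.ofReal_inv]
  simp_rw [this]
  rw [intervalIntegral.integral_ofReal, integral_inv h0]
  norm_num [Real.log_inv]

lemma aux_cpow_intervalIntegrable (ε : ℝ) (hε : 0 < ε) (hε1 : ε ≤ 1) (ν : ℂ) :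
    IntervalIntegrable (fun x : ℝ => (x:ℂ) ^ ν) volume ε 1 := by
  apply intervalIntegral.intervalIntegrable_cpow
  right
  rw [Set.uIcc_of_le hε1]; rintro ⟨h, -⟩; linarith

/-- Key lemma: if `∑ k ∈ Ω, d k • x^k` (all `re k ≤ -1`) is integrable on `(0,1)`,
then all coefficients vanish. -/
lemma bad_coeffs_zero (n : ℕ) : ∀ (Ω : Finset ℂ), Ω.card = n → ∀ (d : ℂ → ℂ),
    (∀ k ∈ Ω, k.re ≤ -1) →
    IntegrableOn (fun x : ℝ => ∑ k ∈ Ω, d k * (x:ℂ) ^ k) (Set.Ioo 0 1) →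
    ∀ k ∈ Ω, d k = 0 := by
  induction n with
  | zero => intro Ω hΩ d _ _ k hk; simp_all
  | succ n ih =>
    intro Ω hΩ d hre hInt
    have hne : Ω.Nonempty := by
      rw [← Finset.card_pos, hΩ]; omega
    obtain ⟨k₀, hk₀Ω, hk₀min⟩ := Ω.exists_min_image (fun k => k.re) hne
    -- the auxiliary function G
    set G : ℝ → ℂ := fun x => ∑ k ∈ Ω, d k * (x:ℂ) ^ (k - k₀ - 1) with hG
    -- G is integrable on (0,1)
    have hGg : ∀ x ∈ Set.Ioo (0:ℝ) 1,
        G x = (∑ k ∈ Ω, d k * (x:ℂ) ^ k) * (x:ℂ) ^ (-(k₀ + 1)) := by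
      intro x hx
      rw [Finset.sum_mul]
      refine Finset.sum_congr rfl fun k hk => ?_
      rw [mul_assoc, ← Complex.cpow_add _ _ (by exact_mod_cast hx.1.ne')]
      ring_nf
    have hwnorm : ∀ x ∈ Set.Ioo (0:ℝ) 1, ‖(x:ℂ) ^ (-(k₀ + 1))‖ ≤ 1 := by
      intro x hx
      rw [Complex.norm_cpow_eq_rpow_re_of_pos hx.1]
      apply Real.rpow_le_one hx.1.le hx.2.le
      have := hre k₀ hk₀Ω
      simp only [Complex.neg_re, Complex.add_re, Complex.one_re]
      linarith
    have hGmeas : AEStronglyMeasurable G (volume.restrict (Set.Ioo (0:ℝ) 1)) := by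
      apply ContinuousOn.aestronglyMeasurable _ measurableSet_Ioo
      apply continuousOn_finset_sum
      intro k hk
      apply ContinuousOn.mul continuousOn_const
      intro x hx
      exact (Complex.continuousAt_ofReal_cpow_const x _ (Or.inr hx.1.ne')).continuousWithinAt
    have hGint : IntegrableOn G (Set.Ioo (0:ℝ) 1) := by
      apply Integrable.mono' (hInt.norm) hGmeas
      rw [ae_restrict_iff' measurableSet_Ioo]
      filter_upwards with x hx
      rw [hGg x hx, norm_mul]
      calc ‖∑ k ∈ Ω, d k * (x:ℂ) ^ k‖ * ‖(x:ℂ) ^ (-(k₀ + 1))‖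
          ≤ ‖∑ k ∈ Ω, d k * (x:ℂ) ^ k‖ * 1 :=
            mul_le_mul_of_nonneg_left (hwnorm x hx) (norm_nonneg _)
        _ = ‖∑ k ∈ Ω, d k * (x:ℂ) ^ k‖ := mul_one _
    -- boundedness of ∫_ε^1 G
    set M : ℝ := ∫ x in Set.Ioo (0:ℝ) 1, ‖G x‖ with hM
    have hbound : ∀ ε : ℝ, 0 < ε → ε ≤ 1 → ‖∫ x in ε..1, G x‖ ≤ M := by
      intro ε hε hε1
      rw [intervalIntegral.integral_of_le hε1, integral_Ioc_eq_integral_Ioo]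
      calc ‖∫ x in Set.Ioo ε 1, G x‖ ≤ ∫ x in Set.Ioo ε 1, ‖G x‖ :=
            norm_integral_le_integral_norm _
        _ ≤ M := by
            apply setIntegral_mono_set hGint.norm
            · filter_upwards with x using norm_nonneg _
            · filter_upwards with x hx using ⟨lt_of_lt_of_le hε hx.1.le, hx.2⟩
    -- the explicit value of ∫_ε^1 G
    have hval : ∀ ε : ℝ, 0 < ε → ε ≤ 1 →
        ∫ x in ε..1, G x
          = d k₀ * (-(Real.log ε) : ℝ)
            + ∑ k ∈ Ω.erase k₀, d k * ((1 - (ε:ℂ) ^ (k - k₀)) / (k - k₀)) := by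
      intro ε hε hε1
      rw [hG]
      rw [intervalIntegral.integral_finset_sum
        (fun k hk => ((aux_cpow_intervalIntegrable ε hε hε1 _).const_mul (d k)))]
      rw [← Finset.add_sum_erase _ _ hk₀Ω]
      congr 1
      · have h1 : k₀ - k₀ - 1 = (-1:ℂ) := by ring
        rw [intervalIntegral.integral_const_mul, h1, aux_cpow_int_neg_one ε hε hε1]
      · refine Finset.sum_congr rfl fun k hk => ?_
        rw [intervalIntegral.integral_const_mul, aux_cpow_int_ne ε hε hε1 _ ?_]
        · ring_nf
        · intro h
          apply Finset.ne_of_mem_erase hk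
          have : k - k₀ - 1 + (k₀ + 1) = -1 + (k₀ + 1) := by rw [h]
          simpa using this
    -- bound on the tail sum
    set C : ℝ := ∑ k ∈ Ω.erase k₀, ‖d k‖ * (2 / ‖k - k₀‖) with hC
    have htail : ∀ ε : ℝ, 0 < ε → ε ≤ 1 →
        ‖∑ k ∈ Ω.erase k₀, d k * ((1 - (ε:ℂ) ^ (k - k₀)) / (k - k₀))‖ ≤ C := by
      intro ε hε hε1
      refine le_trans (norm_sum_le _ _) (Finset.sum_le_sum fun k hk => ?_)
      rw [norm_mul]
      apply mul_le_mul_of_nonneg_left _ (norm_nonneg _)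
      rw [norm_div]
      have hkk : (0:ℝ) < ‖k - k₀‖ := by
        rw [norm_pos_iff, sub_ne_zero]
        exact Finset.ne_of_mem_erase hk
      rw [div_le_div_iff₀ hkk hkk]
      have h2 : ‖1 - (ε:ℂ) ^ (k - k₀)‖ ≤ 2 := by
        calc ‖1 - (ε:ℂ) ^ (k - k₀)‖ ≤ ‖(1:ℂ)‖ + ‖(ε:ℂ) ^ (k - k₀)‖ := norm_sub_le _ _
          _ ≤ 1 + 1 := by
              gcongr
              · simp
              · rw [Complex.norm_cpow_eq_rpow_re_of_pos hε]
                apply Real.rpow_le_one hε.le hε1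
                have h1 := hk₀min k (Finset.mem_of_mem_erase hk)
                simp only [Complex.sub_re]; linarith
          _ = 2 := by norm_num
      nlinarith
    -- d k₀ = 0
    have hdk₀ : d k₀ = 0 := by
      by_contra hne0
      have hpos : 0 < ‖d k₀‖ := norm_pos_iff.mpr hne0
      obtain ⟨n, hn⟩ := exists_nat_gt ((M + C) / ‖d k₀‖)
      set ε : ℝ := Real.exp (-(n+1 : ℝ)) with hεdef
      have hε : 0 < ε := Real.exp_pos _
      have hε1 : ε ≤ 1 := by
        apply le_of_lt
        apply Real.exp_lt_one_iff.mpr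
        have : (0:ℝ) < (n:ℝ) + 1 := by positivity
        linarith
      have hlog : Real.log ε = -((n:ℝ)+1) := Real.log_exp _
      have key : ‖d k₀‖ * ((n:ℝ)+1) ≤ M + C := by
        have e1 := hval ε hε hε1
        have e2 := hbound ε hε hε1
        have e3 := htail ε hε hε1
        rw [e1, hlog] at e2
        have e4 : ‖d k₀ * ((-(Real.log ε) : ℝ) : ℂ)‖
            ≤ ‖d k₀ * ((-(Real.log ε) : ℝ) : ℂ)
                + ∑ k ∈ Ω.erase k₀, d k * ((1 - (ε:ℂ) ^ (k - k₀)) / (k - k₀))‖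
              + ‖∑ k ∈ Ω.erase k₀, d k * ((1 - (ε:ℂ) ^ (k - k₀)) / (k - k₀))‖ := by
          apply norm_le_add_norm_add
        rw [norm_mul, Complex.norm_real, hlog] at e4
        have : |(-(-((n:ℝ)+1)))| = (n:ℝ)+1 := by
          rw [neg_neg, abs_of_pos]; positivity
        rw [Real.norm_eq_abs, this] at e4
        linarith
      have : (M + C) / ‖d k₀‖ ≥ (n:ℝ) + 1 := by
        rw [ge_iff_le, le_div_iff₀ hpos]
        linarith [key]
      have : ((n:ℝ)) < (n:ℝ) + 1 := by linarith
      linarith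
    -- conclude by induction
    have hfun : ∀ x : ℝ, ∑ k ∈ Ω.erase k₀, d k * (x:ℂ) ^ k = ∑ k ∈ Ω, d k * (x:ℂ) ^ k := by
      intro x
      rw [← Finset.add_sum_erase _ _ hk₀Ω, hdk₀]
      simp
    have hInt' : IntegrableOn (fun x : ℝ => ∑ k ∈ Ω.erase k₀, d k * (x:ℂ) ^ k)
        (Set.Ioo 0 1) := by
      simp_rw [hfun]; exact hInt
    have hrest := ih (Ω.erase k₀) (by rw [Finset.card_erase_of_mem hk₀Ω, hΩ]; rfl) d
      (fun k hk => hre k (Finset.mem_of_mem_erase hk)) hInt'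
    intro k hk
    rcases eq_or_ne k k₀ with rfl | hkk
    · exact hdk₀
    · exact hrest k (Finset.mem_erase.mpr ⟨hkk, hk⟩)

lemma good_cpow_integrableOn (k : ℂ) (hk : -1 < k.re) :
    IntegrableOn (fun x : ℝ => (x:ℂ) ^ k) (Set.Ioo 0 1) := by
  rw [← intervalIntegrable_iff_integrableOn_Ioo_of_le (by norm_num : (0:ℝ) ≤ 1)]
  exact intervalIntegral.intervalIntegrable_cpow' hk

lemma sum_div_eq_integral (Ω : Finset ℂ) (d : ℂ → ℂ)
    (hInt : IntegrableOn (fun x : ℝ => ∑ k ∈ Ω, d k * (x:ℂ) ^ k) (Set.Ioo 0 1)) :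
    ∑ k ∈ Ω.erase (-1), d k / (k + 1)
      = ∫ x in Set.Ioo (0:ℝ) 1, ∑ k ∈ Ω, d k * (x:ℂ) ^ k := by
  classical
  set Gd : Finset ℂ := Ω.filter (fun k => -1 < k.re) with hGd
  set B : Finset ℂ := Ω.filter (fun k => ¬(-1 < k.re)) with hB
  have hgood : IntegrableOn (fun x : ℝ => ∑ k ∈ Gd, d k * (x:ℂ) ^ k) (Set.Ioo 0 1) := by
    apply integrable_finset_sum
    intro k hk
    exact ((good_cpow_integrableOn k (Finset.mem_filter.mp hk).2).const_mul (d k))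
  have hsplit : ∀ x : ℝ, ∑ k ∈ Ω, d k * (x:ℂ) ^ k
      = (∑ k ∈ Gd, d k * (x:ℂ) ^ k) + ∑ k ∈ B, d k * (x:ℂ) ^ k := by
    intro x
    rw [hGd, hB, Finset.sum_filter_add_sum_filter_not]
  have hbadInt : IntegrableOn (fun x : ℝ => ∑ k ∈ B, d k * (x:ℂ) ^ k) (Set.Ioo 0 1) := by
    have : (fun x : ℝ => ∑ k ∈ B, d k * (x:ℂ) ^ k)
        = fun x : ℝ => (∑ k ∈ Ω, d k * (x:ℂ) ^ k) - ∑ k ∈ Gd, d k * (x:ℂ) ^ k := by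
      funext x; rw [hsplit x]; ring
    rw [this]
    exact hInt.sub hgood
  have hbad0 : ∀ k ∈ B, d k = 0 :=
    bad_coeffs_zero B.card B rfl d
      (fun k hk => by
        have := (Finset.mem_filter.mp hk).2
        linarith [not_lt.mp this])
      hbadInt
  have hfull : ∀ x : ℝ, ∑ k ∈ Ω, d k * (x:ℂ) ^ k = ∑ k ∈ Gd, d k * (x:ℂ) ^ k := by
    intro x
    have hz : ∑ k ∈ B, d k * (x:ℂ) ^ k = 0 :=
      Finset.sum_eq_zero (fun k hk => by rw [hbad0 k hk, zero_mul])
    rw [hsplit x, hz, add_zero]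
  -- RHS
  have hrhs : ∫ x in Set.Ioo (0:ℝ) 1, ∑ k ∈ Ω, d k * (x:ℂ) ^ k
      = ∑ k ∈ Gd, d k / (k + 1) := by
    simp_rw [hfull]
    rw [integral_finset_sum _ (fun k hk =>
      ((good_cpow_integrableOn k (Finset.mem_filter.mp hk).2).const_mul (d k)))]
    refine Finset.sum_congr rfl fun k hk => ?_
    have hkre : -1 < k.re := (Finset.mem_filter.mp hk).2
    rw [integral_const_mul]
    have : ∫ x in Set.Ioo (0:ℝ) 1, (x:ℂ) ^ k = 1 / (k + 1) := by
      rw [← integral_Ioc_eq_integral_Ioo,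
        ← intervalIntegral.integral_of_le (by norm_num : (0:ℝ) ≤ 1),
        integral_cpow (Or.inl hkre)]
      have hk1 : k + 1 ≠ 0 := by
        intro h
        have : (k+1).re = 0 := by rw [h]; simp
        simp only [Complex.add_re, Complex.one_re] at this
        linarith
      rw [Complex.ofReal_one, Complex.ofReal_zero, Complex.one_cpow, Complex.zero_cpow hk1]
      norm_num
    rw [this]
    ring
  rw [hrhs]
  -- LHS
  symm
  apply Finset.sum_subset
  · intro k hk
    have := Finset.mem_filter.mp hk
    refine Finset.mem_erase.mpr ⟨?_, this.1⟩
    intro h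
    rw [h] at this
    simp at this
  · intro k hk hnk
    have hkΩ := Finset.mem_of_mem_erase hk
    have : k ∈ B := Finset.mem_filter.mpr ⟨hkΩ, fun h => hnk (Finset.mem_filter.mpr ⟨hkΩ, h⟩)⟩
    rw [hbad0 k this, zero_div]


/-- The value of the generalized (Hadamard–Riesz) integral of `f` on `(a, ∞)`
computed from admissible data `(Ω, c)`:
`gen∫_a^∞ f = ∑_{k∈Ω, k≠-1} c_k/(k+1) + ∫_a^{a+1}(f(r) - ∑_{k∈Ω} c_k (r-a)^k) dr
+ ∫_{a+1}^∞ f(r) dr`. -/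
noncomputable def genVal (a : ℝ) (f : ℝ → ℂ) (Ω : Finset ℂ) (c : ℂ → ℂ) : ℂ :=
  (∑ k ∈ Ω.erase (-1), c k / (k + 1))
    + (∫ r in Set.Ioo a (a + 1), (f r - ∑ k ∈ Ω, c k * ((r - a : ℝ) : ℂ) ^ k))
    + ∫ r in Set.Ioi (a + 1), f r

/-- Well-definedness of the generalized integral: if `f` is integrable on
`(a+1, ∞)` and both `(Ω₁, c₁)` and `(Ω₂, c₂)` are admissible data (i.e. `f`
minus the corresponding singular sum is integrable on `(a, a+1)`), then the
two resulting values of `gen∫_a^∞ f` coincide. -/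
theorem genVal_welldefined (a : ℝ) (f : ℝ → ℂ)
    (Ω₁ Ω₂ : Finset ℂ) (c₁ c₂ : ℂ → ℂ)
    (hf : MeasureTheory.IntegrableOn f (Set.Ioi (a + 1)))
    (h1 : MeasureTheory.IntegrableOn
      (fun r => f r - ∑ k ∈ Ω₁, c₁ k * ((r - a : ℝ) : ℂ) ^ k) (Set.Ioo a (a + 1)))
    (h2 : MeasureTheory.IntegrableOn
      (fun r => f r - ∑ k ∈ Ω₂, c₂ k * ((r - a : ℝ) : ℂ) ^ k) (Set.Ioo a (a + 1))) :
    genVal a f Ω₁ c₁ = genVal a f Ω₂ c₂ := by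
  classical
  set Ω : Finset ℂ := Ω₁ ∪ Ω₂ with hΩ
  set d : ℂ → ℂ := fun k => (if k ∈ Ω₁ then c₁ k else 0) - (if k ∈ Ω₂ then c₂ k else 0)
    with hd
  set F : ℝ → ℂ := fun x => ∑ k ∈ Ω, d k * (x:ℂ) ^ k with hF
  -- expanding the two singular sums over the union
  have e1 : ∀ x : ℝ, ∑ k ∈ Ω, (if k ∈ Ω₁ then c₁ k else 0) * (x:ℂ) ^ k
      = ∑ k ∈ Ω₁, c₁ k * (x:ℂ) ^ k := by
    intro x
    rw [← Finset.sum_subset (Finset.subset_union_left)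
      (fun k _ hnk => by rw [if_neg hnk, zero_mul])]
    exact Finset.sum_congr rfl fun k hk => by rw [if_pos hk]
  have e2 : ∀ x : ℝ, ∑ k ∈ Ω, (if k ∈ Ω₂ then c₂ k else 0) * (x:ℂ) ^ k
      = ∑ k ∈ Ω₂, c₂ k * (x:ℂ) ^ k := by
    intro x
    rw [← Finset.sum_subset (Finset.subset_union_right)
      (fun k _ hnk => by rw [if_neg hnk, zero_mul])]
    exact Finset.sum_congr rfl fun k hk => by rw [if_pos hk]
  have hS : ∀ r : ℝ,
      (∑ k ∈ Ω₁, c₁ k * ((r - a : ℝ) : ℂ) ^ k) - (∑ k ∈ Ω₂, c₂ k * ((r - a : ℝ) : ℂ) ^ k)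
        = F (r - a) := by
    intro r
    rw [hF, ← e1 (r - a), ← e2 (r - a), ← Finset.sum_sub_distrib]
    exact Finset.sum_congr rfl fun k hk => by rw [hd]; ring
  -- integrability of F ∘ (· − a) on (a, a+1)
  have hdInt : IntegrableOn (fun r : ℝ => F (r - a)) (Set.Ioo a (a + 1)) := by
    have heq : (fun r : ℝ => F (r - a))
        = fun r : ℝ => (f r - ∑ k ∈ Ω₂, c₂ k * ((r - a : ℝ) : ℂ) ^ k)
            - (f r - ∑ k ∈ Ω₁, c₁ k * ((r - a : ℝ) : ℂ) ^ k) := by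
      funext r; rw [← hS r]; ring
    rw [heq]
    exact h2.sub h1
  -- integrability of F on (0,1)
  have hFint : IntegrableOn F (Set.Ioo 0 1) := by
    rw [← intervalIntegrable_iff_integrableOn_Ioo_of_le (by norm_num : (0:ℝ) ≤ 1)]
    have h' := (intervalIntegrable_iff_integrableOn_Ioo_of_le
      (by linarith : a ≤ a + 1)).mpr hdInt
    have h'' := h'.comp_add_right a
    simpa using h''
  -- key identity from Lemma B
  have key : ∑ k ∈ Ω.erase (-1), d k / (k + 1) = ∫ x in Set.Ioo (0:ℝ) 1, F x :=
    sum_div_eq_integral Ω d hFint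
  -- translating the integral
  have hIooEq : ∫ r in Set.Ioo a (a + 1), F (r - a) = ∫ x in Set.Ioo (0:ℝ) 1, F x := by
    rw [← integral_Ioc_eq_integral_Ioo,
      ← intervalIntegral.integral_of_le (by linarith : a ≤ a + 1),
      intervalIntegral.integral_comp_sub_right F a]
    have hb : a - a = (0:ℝ) := by ring
    have hb' : a + 1 - a = (1:ℝ) := by ring
    rw [hb, hb', intervalIntegral.integral_of_le (by norm_num : (0:ℝ) ≤ 1),
      integral_Ioc_eq_integral_Ioo]
  -- difference of the coefficient sums
  have hA : (∑ k ∈ Ω₁.erase (-1), c₁ k / (k + 1)) - (∑ k ∈ Ω₂.erase (-1), c₂ k / (k + 1))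
      = ∑ k ∈ Ω.erase (-1), d k / (k + 1) := by
    have a1 : ∑ k ∈ Ω.erase (-1), (if k ∈ Ω₁ then c₁ k else 0) / (k + 1)
        = ∑ k ∈ Ω₁.erase (-1), c₁ k / (k + 1) := by
      rw [← Finset.sum_subset (Finset.erase_subset_erase _ Finset.subset_union_left)
        (fun k hk hnk => by
          rw [if_neg, zero_div]
          intro hmem
          exact hnk (Finset.mem_erase.mpr ⟨(Finset.mem_erase.mp hk).1, hmem⟩))]
      exact Finset.sum_congr rfl fun k hk => by
        rw [if_pos (Finset.mem_of_mem_erase hk)]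
    have a2 : ∑ k ∈ Ω.erase (-1), (if k ∈ Ω₂ then c₂ k else 0) / (k + 1)
        = ∑ k ∈ Ω₂.erase (-1), c₂ k / (k + 1) := by
      rw [← Finset.sum_subset (Finset.erase_subset_erase _ Finset.subset_union_right)
        (fun k hk hnk => by
          rw [if_neg, zero_div]
          intro hmem
          exact hnk (Finset.mem_erase.mpr ⟨(Finset.mem_erase.mp hk).1, hmem⟩))]
      exact Finset.sum_congr rfl fun k hk => by
        rw [if_pos (Finset.mem_of_mem_erase hk)]
    rw [← a1, ← a2, ← Finset.sum_sub_distrib]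
    exact Finset.sum_congr rfl fun k hk => by rw [hd]; ring
  -- difference of the regularized integrals
  have hI : (∫ r in Set.Ioo a (a + 1), (f r - ∑ k ∈ Ω₂, c₂ k * ((r - a : ℝ) : ℂ) ^ k))
      - (∫ r in Set.Ioo a (a + 1), (f r - ∑ k ∈ Ω₁, c₁ k * ((r - a : ℝ) : ℂ) ^ k))
      = ∫ x in Set.Ioo (0:ℝ) 1, F x := by
    rw [← integral_sub h2 h1]
    have heq : ∀ r : ℝ,
        (f r - ∑ k ∈ Ω₂, c₂ k * ((r - a : ℝ) : ℂ) ^ k)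
          - (f r - ∑ k ∈ Ω₁, c₁ k * ((r - a : ℝ) : ℂ) ^ k) = F (r - a) := by
      intro r; rw [← hS r]; ring
    calc ∫ r in Set.Ioo a (a + 1),
          ((f r - ∑ k ∈ Ω₂, c₂ k * ((r - a : ℝ) : ℂ) ^ k)
            - (f r - ∑ k ∈ Ω₁, c₁ k * ((r - a : ℝ) : ℂ) ^ k))
        = ∫ r in Set.Ioo a (a + 1), F (r - a) := by
          exact integral_congr_ae (Filter.Eventually.of_forall fun r => heq r)
      _ = ∫ x in Set.Ioo (0:ℝ) 1, F x := hIooEq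
  -- conclude
  rw [genVal, genVal]
  linear_combination hA + key - hI
end

section
/- Let f be integrable in the generalized sense on (0, ∞) with singular expansion coefficients (f_k)_{k∈Ω} at 0, and let α > 0. Then gen∫_0^∞ f(αu) α du = gen∫_0^∞ f(r) dr - f_{-1} ln α, where f_{-1} is the coefficient of r^{-1} in the expansion of f at 0 (taken to be 0 if -1 ∉ Ω). -/
open Real MeasureTheory Finset

set_option maxHeartbeats 1000000 in
/-- Scaling anomaly of the generalized integral: for `α > 0` and `f` integrable
in the generalized sense on `(0, ∞)` with singular expansion data `(Ω, c)` at
`0`,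
`gen∫_0^∞ f(αu) α du = gen∫_0^∞ f(r) dr - f_{-1} ln α`,
where `f_{-1}` is the coefficient of `r^{-1}` (taken to be `0` if `-1 ∉ Ω`). -/
theorem genVal_scaling (α : ℝ) (hα : 0 < α) (f : ℝ → ℂ)
    (Ω : Finset ℂ) (c : ℂ → ℂ)
    (hf : MeasureTheory.IntegrableOn f (Set.Ioi (1 : ℝ)))
    (h0 : MeasureTheory.IntegrableOn
      (fun r => f r - ∑ k ∈ Ω, c k * ((r : ℝ) : ℂ) ^ k) (Set.Ioo (0 : ℝ) 1)) :
    genVal 0 (fun u => (α : ℂ) * f (α * u)) Ω (fun k => c k * (α : ℂ) ^ (k + 1))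
      = genVal 0 f Ω c
        - (if (-1 : ℂ) ∈ Ω then c (-1) else 0) * (Real.log α : ℂ) := by
  have hαne : (α : ℝ) ≠ 0 := hα.ne'
  have hα0 : (α : ℂ) ≠ 0 := Complex.ofReal_ne_zero.mpr hαne
  simp only [genVal, sub_zero, zero_add]
  set F : ℝ → ℂ := fun y => f y - ∑ k ∈ Ω, c k * ((y : ℝ) : ℂ) ^ k with hFdef
  -- integrability of the singular sum away from 0
  have hSInt : ∀ a b : ℝ, 0 < a → 0 < b →
      IntervalIntegrable (fun x : ℝ => ∑ k ∈ Ω, c k * ((x : ℝ) : ℂ) ^ k) volume a b := by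
    intro a b ha hb
    have h2 : (fun x : ℝ => ∑ k ∈ Ω, c k * ((x : ℝ) : ℂ) ^ k)
        = ∑ k ∈ Ω, (fun x : ℝ => c k * ((x : ℝ) : ℂ) ^ k) := by
      funext x; simp
    rw [h2]
    exact IntervalIntegrable.sum _ fun k _ =>
      (intervalIntegral.intervalIntegrable_cpow
        (Or.inr (Set.notMem_uIcc_of_lt ha hb))).const_mul _
  have hF01 : IntervalIntegrable F volume 0 1 := by
    rw [intervalIntegrable_iff_integrableOn_Ioc_of_le zero_le_one,
      integrableOn_Ioc_iff_integrableOn_Ioo]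
    exact h0
  have hf1α : IntervalIntegrable f volume 1 α := by
    rcases le_or_gt 1 α with h | h
    · rw [intervalIntegrable_iff_integrableOn_Ioc_of_le h]
      exact hf.mono_set Set.Ioc_subset_Ioi_self
    · apply IntervalIntegrable.symm
      rw [intervalIntegrable_iff_integrableOn_Ioc_of_le h.le,
        integrableOn_Ioc_iff_integrableOn_Ioo]
      have hg' : IntegrableOn F (Set.Ioo α 1) := h0.mono_set (Set.Ioo_subset_Ioo_left hα.le)
      have hS' : IntegrableOn (fun x : ℝ => ∑ k ∈ Ω, c k * ((x : ℝ) : ℂ) ^ k)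
          (Set.Ioo α 1) := by
        have := (intervalIntegrable_iff_integrableOn_Ioc_of_le h.le).mp (hSInt α 1 hα one_pos)
        rwa [integrableOn_Ioc_iff_integrableOn_Ioo] at this
      have hsum := hg'.add hS'
      simp only [hFdef, Pi.add_def, sub_add_cancel] at hsum
      exact hsum
  have hF1α : IntervalIntegrable F volume 1 α := by
    rw [hFdef]; exact hf1α.sub (hSInt 1 α one_pos hα)
  -- splitting the tail integral
  have splitIoi : ∫ r in Set.Ioi α, f r
      = (∫ r in Set.Ioi (1 : ℝ), f r) - ∫ x in (1:ℝ)..α, f x := by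
    rcases le_or_gt 1 α with h | h
    · have h1 : IntegrableOn f (Set.Ioc 1 α) :=
        (intervalIntegrable_iff_integrableOn_Ioc_of_le h).mp hf1α
      have h2 : IntegrableOn f (Set.Ioi α) := hf.mono_set (Set.Ioi_subset_Ioi h)
      have h3 := MeasureTheory.setIntegral_union (Set.Ioc_disjoint_Ioi le_rfl)
        measurableSet_Ioi h1 h2 (f := f) (μ := volume)
      rw [Set.Ioc_union_Ioi_eq_Ioi h] at h3
      rw [h3, intervalIntegral.integral_of_le h]
      ring
    · have h1 : IntegrableOn f (Set.Ioc α 1) :=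
        (intervalIntegrable_iff_integrableOn_Ioc_of_le h.le).mp hf1α.symm
      have h3 := MeasureTheory.setIntegral_union (Set.Ioc_disjoint_Ioi le_rfl)
        measurableSet_Ioi h1 hf (f := f) (μ := volume)
      rw [Set.Ioc_union_Ioi_eq_Ioi h.le] at h3
      rw [h3, intervalIntegral.integral_symm, intervalIntegral.integral_of_le h.le]
      ring
  -- the tail term of the LHS
  have key3 : ∫ r in Set.Ioi (1:ℝ), (α : ℂ) * f (α * r)
      = (∫ r in Set.Ioi (1 : ℝ), f r) - ∫ x in (1:ℝ)..α, f x := by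
    rw [MeasureTheory.integral_const_mul,
      MeasureTheory.integral_comp_mul_left_Ioi (fun x => f x) 1 hα, mul_one,
      Complex.real_smul, Complex.ofReal_inv, ← mul_assoc, mul_inv_cancel₀ hα0, one_mul]
    exact splitIoi
  -- the middle term of the LHS
  have key2 : (∫ r in Set.Ioo (0:ℝ) 1,
        ((α : ℂ) * f (α * r) - ∑ k ∈ Ω, c k * (α : ℂ) ^ (k + 1) * ((r : ℝ) : ℂ) ^ k))
      = (∫ r in Set.Ioo (0:ℝ) 1, F r) + ∫ x in (1:ℝ)..α, F x := by
    have hEq : Set.EqOn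
        (fun r : ℝ => (α : ℂ) * f (α * r) - ∑ k ∈ Ω, c k * (α : ℂ) ^ (k + 1) * ((r : ℝ) : ℂ) ^ k)
        (fun r : ℝ => (α : ℝ) • F (α * r)) (Set.Ioo 0 1) := by
      intro r hr
      have hr0 : (0:ℝ) ≤ r := hr.1.le
      simp only [hFdef, Complex.real_smul, Complex.ofReal_mul, mul_sub, Finset.mul_sum]
      congr 1
      refine Finset.sum_congr rfl fun k _ => ?_
      rw [Complex.mul_cpow_ofReal_nonneg hα.le hr0, Complex.cpow_add _ _ hα0, Complex.cpow_one]
      ring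
    rw [MeasureTheory.setIntegral_congr_fun measurableSet_Ioo hEq,
      ← MeasureTheory.integral_Ioc_eq_integral_Ioo,
      ← intervalIntegral.integral_of_le zero_le_one, intervalIntegral.integral_smul,
      intervalIntegral.integral_comp_mul_left F hαne, smul_inv_smul₀ hαne,
      mul_zero, mul_one,
      ← intervalIntegral.integral_add_adjacent_intervals hF01 hF1α,
      intervalIntegral.integral_of_le zero_le_one,
      MeasureTheory.integral_Ioc_eq_integral_Ioo]
  -- computing the integral of the singular sum on [1, α]
  have h0u : (0:ℝ) ∉ Set.uIcc (1:ℝ) α := Set.notMem_uIcc_of_lt one_pos hα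
  have hinv : (∫ x in (1:ℝ)..α, ((x : ℝ) : ℂ) ^ (-1 : ℂ)) = (Real.log α : ℂ) := by
    rw [intervalIntegral.integral_congr (g := fun x : ℝ => ((x⁻¹ : ℝ) : ℂ))
      (fun x _ => by simp [Complex.cpow_neg_one, Complex.ofReal_inv]),
      intervalIntegral.integral_ofReal, integral_inv h0u, div_one]
  have hSsum : (∫ x in (1:ℝ)..α, ∑ k ∈ Ω, c k * ((x : ℝ) : ℂ) ^ k)
      = (if (-1 : ℂ) ∈ Ω then c (-1) * (Real.log α : ℂ) else 0)
        + ∑ k ∈ Ω.erase (-1), c k * (((α : ℂ) ^ (k + 1) - 1) / (k + 1)) := by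
    rw [intervalIntegral.integral_finset_sum fun k _ =>
      (intervalIntegral.intervalIntegrable_cpow (Or.inr h0u)).const_mul _]
    have herase : ∀ k ∈ Ω.erase (-1),
        (∫ x in (1:ℝ)..α, c k * ((x : ℝ) : ℂ) ^ k)
          = c k * (((α : ℂ) ^ (k + 1) - 1) / (k + 1)) := by
      intro k hk
      rw [intervalIntegral.integral_const_mul,
        integral_cpow (Or.inr ⟨(Finset.mem_erase.mp hk).1, h0u⟩)]
      norm_num
    by_cases hmem : (-1 : ℂ) ∈ Ω
    · rw [← Finset.add_sum_erase _ _ hmem, if_pos hmem]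
      congr 1
      · rw [intervalIntegral.integral_const_mul, hinv]
      · exact Finset.sum_congr rfl herase
    · rw [Finset.erase_eq_of_notMem hmem, if_neg hmem, zero_add]
      exact Finset.sum_congr rfl fun k hk =>
        herase k (Finset.mem_erase.mpr ⟨fun h => hmem (h ▸ hk), hk⟩)
  have hFint1α : (∫ x in (1:ℝ)..α, F x)
      = (∫ x in (1:ℝ)..α, f x) - ∫ x in (1:ℝ)..α, ∑ k ∈ Ω, c k * ((x : ℝ) : ℂ) ^ k := by
    rw [hFdef, intervalIntegral.integral_sub hf1α (hSInt 1 α one_pos hα)]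
  -- the sum identity
  have hsum : ∑ k ∈ Ω.erase (-1), c k * (((α : ℂ) ^ (k + 1) - 1) / (k + 1))
      = (∑ k ∈ Ω.erase (-1), c k * (α : ℂ) ^ (k + 1) / (k + 1))
        - ∑ k ∈ Ω.erase (-1), c k / (k + 1) := by
    rw [← Finset.sum_sub_distrib]
    refine Finset.sum_congr rfl fun k hk => ?_
    have hk1 : (k : ℂ) + 1 ≠ 0 := fun h =>
      (Finset.mem_erase.mp hk).1 (by linear_combination h)
    field_simp
  have hIF : (if (-1 : ℂ) ∈ Ω then c (-1) * (Real.log α : ℂ) else 0)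
      = (if (-1 : ℂ) ∈ Ω then c (-1) else 0) * (Real.log α : ℂ) := by
    split_ifs <;> simp
  rw [key2, key3, hFint1α, hSsum, hsum, hIF]
  ring
end

section
/- Let f be integrable in the generalized sense on (0, ∞) and α > 0. Then gen∫_0^∞ f(u^α) · α u^{α-1} du = gen∫_0^∞ f(r) dr, i.e. the generalized integral is invariant under the substitution r = u^α. -/
set_option maxHeartbeats 1000000

open Real MeasureTheory Finset

section Auxiliary

open intervalIntegral

/-- If a finite sum of complex monomials is integrable on `(0,1)`, then every coefficient
attached to an exponent of real part `≤ -1` vanishes. -/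
lemma coeff_eq_zero_of_integrableOn (S : Finset ℂ) :
    ∀ d : ℂ → ℂ,
      IntegrableOn (fun u : ℝ => ∑ k ∈ S, d k * ((u : ℝ) : ℂ) ^ k) (Set.Ioo (0:ℝ) 1) →
      ∀ k ∈ S, k.re ≤ -1 → d k = 0 := by
  induction S using Finset.strongInduction with
  | _ S ih =>
    intro d hint k hk hkre
    -- pick an exponent of minimal real part
    obtain ⟨m, hmS, hmin⟩ := S.exists_min_image (fun k => k.re) ⟨k, hk⟩
    have hmre : m.re ≤ -1 := le_trans (hmin k hk) hkre
    -- main step : d m = 0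
    have hdm : d m = 0 := by
      set h : ℝ → ℂ := fun u : ℝ => ∑ k ∈ S, d k * ((u : ℝ) : ℂ) ^ k with hh
      set C : ℝ := ∫ u in Set.Ioo (0:ℝ) 1, ‖h u‖ with hC
      have hC0 : 0 ≤ C := integral_nonneg fun u => norm_nonneg _
      set ε : ℕ → ℝ := fun n => Real.exp (-((n:ℝ)+1)) with hε
      have hε0 : ∀ n, 0 < ε n := fun n => Real.exp_pos _
      have hε1 : ∀ n, ε n < 1 := fun n => by
        rw [hε]
        exact Real.exp_lt_one_iff.mpr (neg_lt_zero.mpr (by positivity))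
      have h0notin : ∀ n, (0:ℝ) ∉ Set.uIcc (ε n) 1 :=
        fun n => Set.notMem_uIcc_of_lt (hε0 n) one_pos
      set φ : ℕ → ℂ := fun n => ∫ x : ℝ in (ε n)..1, ∑ k ∈ S, d k * ((x:ℝ):ℂ) ^ (k - (m+1))
        with hφ
      -- bound on φ
      have hbound : ∀ n, ‖φ n‖ ≤ C := by
        intro n
        have hIi : ∀ r : ℂ, IntervalIntegrable (fun x : ℝ => (x:ℂ) ^ r) volume (ε n) 1 :=
          fun r => intervalIntegrable_cpow (Or.inr (h0notin n))
        have hInt1 : IntervalIntegrable (fun x : ℝ => ∑ k ∈ S, d k * ((x:ℝ):ℂ) ^ (k - (m+1)))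
            volume (ε n) 1 := by
          have := IntervalIntegrable.sum
            (f := fun (k : ℂ) (x : ℝ) => d k * ((x:ℝ):ℂ) ^ (k - (m+1)))
            (μ := volume) (a := ε n) (b := 1) S (fun k _ => (hIi _).const_mul _)
          simpa [Finset.sum_fn] using this
        have hInth : IntervalIntegrable h volume (ε n) 1 := by
          rw [intervalIntegrable_iff_integrableOn_Ioo_of_le (hε1 n).le]
          exact hint.mono_set (fun x hx => ⟨lt_trans (hε0 n) hx.1, hx.2⟩)
        calc ‖φ n‖ ≤ ∫ x in (ε n)..1, ‖∑ k ∈ S, d k * ((x:ℝ):ℂ) ^ (k - (m+1))‖ :=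
              intervalIntegral.norm_integral_le_integral_norm (hε1 n).le
          _ ≤ ∫ x in (ε n)..1, ‖h x‖ := by
              apply intervalIntegral.integral_mono_on (hε1 n).le hInt1.norm hInth.norm
              intro x hx
              have hx0 : 0 < x := lt_of_lt_of_le (hε0 n) hx.1
              have hxc : ((x:ℝ):ℂ) ≠ 0 := by
                simpa using hx0.ne'
              have : (fun k => d k * ((x:ℝ):ℂ) ^ (k - (m+1))) =
                  fun k => (d k * ((x:ℝ):ℂ) ^ k) * ((x:ℝ):ℂ) ^ (-(m+1)) := by
                funext k
                rw [mul_assoc, ← Complex.cpow_add _ _ hxc, sub_eq_add_neg]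
              rw [this, ← Finset.sum_mul]
              rw [norm_mul]
              have : ‖((x:ℝ):ℂ) ^ (-(m+1))‖ ≤ 1 := by
                rw [Complex.norm_cpow_eq_rpow_re_of_pos hx0]
                apply Real.rpow_le_one hx0.le hx.2
                simp only [Complex.neg_re, Complex.add_re, Complex.one_re]
                linarith
              calc ‖h x‖ * ‖((x:ℝ):ℂ) ^ (-(m+1))‖ ≤ ‖h x‖ * 1 :=
                    mul_le_mul_of_nonneg_left this (norm_nonneg _)
                _ = ‖h x‖ := mul_one _
          _ = ∫ x in Set.Ioo (ε n) 1, ‖h x‖ := by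
              rw [intervalIntegral.integral_of_le (hε1 n).le, integral_Ioc_eq_integral_Ioo]
          _ ≤ C := by
              apply setIntegral_mono_set hint.norm
              · exact Filter.Eventually.of_forall fun x => norm_nonneg _
              · exact Filter.Eventually.of_forall
                  (fun x hx => ⟨lt_trans (hε0 n) hx.1, hx.2⟩)
      -- explicit value of φ
      have hval : ∀ n, φ n = (∑ k ∈ S.erase m, d k * ((1 - ((ε n : ℝ):ℂ) ^ (k - m)) / (k - m)))
          + d m * (((n:ℝ)+1 : ℝ) : ℂ) := by
        intro n
        have hIi : ∀ r : ℂ, IntervalIntegrable (fun x : ℝ => (x:ℂ) ^ r) volume (ε n) 1 :=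
          fun r => intervalIntegrable_cpow (Or.inr (h0notin n))
        simp only [hφ]
        rw [intervalIntegral.integral_finset_sum
          (f := fun (k : ℂ) (x : ℝ) => d k * ((x:ℝ):ℂ) ^ (k - (m+1)))
          (fun k _ => (hIi _).const_mul _)]
        rw [← Finset.sum_erase_add _ _ hmS]
        congr 1
        · apply Finset.sum_congr rfl
          intro j hj
          have hjm : j ≠ m := Finset.ne_of_mem_erase hj
          rw [intervalIntegral.integral_const_mul]
          congr 1
          have hne : j - (m+1) ≠ -1 := by
            intro hcon
            apply hjm
            have := congrArg (· + (m+1)) hcon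
            simp at this
            linear_combination this
          rw [integral_cpow (Or.inr ⟨hne, h0notin n⟩)]
          have h1 : j - (m+1) + 1 = j - m := by ring
          rw [h1, Complex.ofReal_one, Complex.one_cpow]
        · rw [intervalIntegral.integral_const_mul]
          congr 1
          have hm1 : m - (m+1) = -1 := by ring
          rw [hm1]
          have : ∀ x ∈ Set.uIcc (ε n) 1, ((x:ℝ):ℂ) ^ (-1 : ℂ) = ((x⁻¹ : ℝ) : ℂ) := by
            intro x hx
            rw [Complex.cpow_neg_one, Complex.ofReal_inv]
          rw [intervalIntegral.integral_congr this, intervalIntegral.integral_ofReal,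
            integral_inv (h0notin n)]
          rw [hε]
          rw [one_div, Real.log_inv, Real.log_exp]
          push_cast
          ring
      -- conclusion via limits
      have key : ∀ n : ℕ, ‖d m‖ ≤ (C + ∑ k ∈ S.erase m, ‖d k‖ * (2 / ‖k - m‖)) / ((n:ℝ)+1) := by
        intro n
        have hn1 : (0:ℝ) < (n:ℝ)+1 := by positivity
        have hrest : ‖∑ k ∈ S.erase m, d k * ((1 - ((ε n : ℝ):ℂ) ^ (k - m)) / (k - m))‖
            ≤ ∑ k ∈ S.erase m, ‖d k‖ * (2 / ‖k - m‖) := by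
          refine le_trans (norm_sum_le _ _) (Finset.sum_le_sum fun j hj => ?_)
          have hjm0 : (0:ℝ) < ‖j - m‖ := by
            rw [norm_pos_iff, sub_ne_zero]
            exact Finset.ne_of_mem_erase hj
          have hnum : ‖1 - ((ε n : ℝ):ℂ) ^ (j - m)‖ ≤ 2 := by
            calc ‖1 - ((ε n : ℝ):ℂ) ^ (j - m)‖ ≤ ‖(1:ℂ)‖ + ‖((ε n : ℝ):ℂ) ^ (j - m)‖ :=
                  norm_sub_le _ _
              _ ≤ 1 + 1 := by
                  apply add_le_add
                  · simp
                  · rw [Complex.norm_cpow_eq_rpow_re_of_pos (hε0 n)]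
                    apply Real.rpow_le_one (hε0 n).le (hε1 n).le
                    have := hmin j (Finset.mem_of_mem_erase hj)
                    simp only [Complex.sub_re]
                    linarith
              _ = 2 := by norm_num
          calc ‖d j * ((1 - ((ε n : ℝ):ℂ) ^ (j - m)) / (j - m))‖
              = ‖d j‖ * (‖1 - ((ε n : ℝ):ℂ) ^ (j - m)‖ / ‖j - m‖) := by
                rw [norm_mul, norm_div]
            _ ≤ ‖d j‖ * (2 / ‖j - m‖) := by gcongr
        have := hval n
        have hdme : d m * (((n:ℝ)+1 : ℝ) : ℂ)
            = φ n - ∑ k ∈ S.erase m, d k * ((1 - ((ε n : ℝ):ℂ) ^ (k - m)) / (k - m)) := by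
          rw [this]; ring
        have hnorm : ‖d m‖ * ((n:ℝ)+1) ≤ C + ∑ k ∈ S.erase m, ‖d k‖ * (2 / ‖k - m‖) := by
          calc ‖d m‖ * ((n:ℝ)+1) = ‖d m * (((n:ℝ)+1 : ℝ) : ℂ)‖ := by
                rw [norm_mul, Complex.norm_real, Real.norm_of_nonneg hn1.le]
            _ ≤ ‖φ n‖ + ‖∑ k ∈ S.erase m, d k * ((1 - ((ε n : ℝ):ℂ) ^ (k - m)) / (k - m))‖ := by
                rw [hdme]; exact norm_sub_le _ _
            _ ≤ C + ∑ k ∈ S.erase m, ‖d k‖ * (2 / ‖k - m‖) := add_le_add (hbound n) hrest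
        rw [le_div_iff₀ hn1]
        exact hnorm
      have hlim : Filter.Tendsto
          (fun n : ℕ => (C + ∑ k ∈ S.erase m, ‖d k‖ * (2 / ‖k - m‖)) / ((n:ℝ)+1))
          Filter.atTop (nhds 0) := by
        apply Filter.Tendsto.div_atTop tendsto_const_nhds
        exact Filter.tendsto_atTop_add_const_right _ _ tendsto_natCast_atTop_atTop
      have : ‖d m‖ ≤ 0 := ge_of_tendsto' hlim key
      simpa using le_antisymm this (norm_nonneg _)
    -- finish by induction on the erased set
    by_cases hkm : k = m
    · rw [hkm]; exact hdm
    · have hk' : k ∈ S.erase m := Finset.mem_erase.mpr ⟨hkm, hk⟩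
      apply ih (S.erase m) (Finset.erase_ssubset hmS) d _ k hk' hkre
      have heq : (fun u : ℝ => ∑ k ∈ S.erase m, d k * ((u : ℝ) : ℂ) ^ k)
          = fun u : ℝ => ∑ k ∈ S, d k * ((u : ℝ) : ℂ) ^ k := by
        funext u
        rw [← Finset.sum_erase_add _ _ hmS, hdm, zero_mul, add_zero]
      rw [heq]
      exact hint

/-- Evaluation of the integral of a finite sum of monomials on `(0,1)`. -/
lemma integral_monomial_sum (S : Finset ℂ) (d : ℂ → ℂ)
    (hint : IntegrableOn (fun u : ℝ => ∑ k ∈ S, d k * ((u : ℝ) : ℂ) ^ k) (Set.Ioo (0:ℝ) 1)) :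
    ∫ u in Set.Ioo (0:ℝ) 1, ∑ k ∈ S, d k * ((u : ℝ) : ℂ) ^ k
      = ∑ k ∈ S.erase (-1), d k / (k + 1) := by
  have hzero := coeff_eq_zero_of_integrableOn S d hint
  -- each term is integrable on (0,1)
  have hterm : ∀ k ∈ S, IntegrableOn (fun u : ℝ => d k * ((u : ℝ) : ℂ) ^ k) (Set.Ioo (0:ℝ) 1) := by
    intro k hk
    by_cases hre : -1 < k.re
    · have h1 : IntervalIntegrable (fun x : ℝ => ((x : ℝ) : ℂ) ^ k) volume 0 1 :=
        intervalIntegrable_cpow' hre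
      rw [intervalIntegrable_iff_integrableOn_Ioo_of_le zero_le_one] at h1
      exact (h1.const_mul _)
    · have hd : d k = 0 := hzero k hk (by linarith [not_lt.mp hre])
      have : (fun u : ℝ => d k * ((u : ℝ) : ℂ) ^ k) = fun _ : ℝ => (0 : ℂ) := by
        funext u; rw [hd, zero_mul]
      rw [this]
      exact integrableOn_zero
  rw [integral_finset_sum S hterm]
  have hval : ∀ k ∈ S, (∫ u in Set.Ioo (0:ℝ) 1, d k * ((u : ℝ) : ℂ) ^ k)
      = if k = -1 then 0 else d k / (k + 1) := by
    intro k hk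
    by_cases hre : -1 < k.re
    · have hne : k ≠ -1 := by
        intro hcon; rw [hcon] at hre; simp at hre
    
      have hk1 : (k + 1) ≠ 0 := by
        intro hcon
        have : (k+1).re = 0 := by rw [hcon]; simp
        simp only [Complex.add_re, Complex.one_re] at this
        linarith
      rw [if_neg hne, MeasureTheory.integral_const_mul]
      rw [← integral_Ioc_eq_integral_Ioo, ← intervalIntegral.integral_of_le zero_le_one,
        integral_cpow (Or.inl hre)]
      rw [Complex.ofReal_one, Complex.ofReal_zero, Complex.one_cpow, Complex.zero_cpow hk1]
      rw [sub_zero, mul_one_div]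
    · have hd : d k = 0 := hzero k hk (by linarith [not_lt.mp hre])
      simp [hd]
  rw [Finset.sum_congr rfl hval]
  have h0 : (if (-1:ℂ) = -1 then (0:ℂ) else d (-1) / ((-1)+1)) = 0 := by simp
  symm
  have : (∑ k ∈ S.erase (-1), d k / (k+1))
      = ∑ k ∈ S.erase (-1), (if k = -1 then 0 else d k / (k+1)) :=
    Finset.sum_congr rfl (fun k hk => by rw [if_neg (Finset.ne_of_mem_erase hk)])
  rw [this]
  exact Finset.sum_erase _ h0

lemma genVal_zero (f : ℝ → ℂ) (Ω : Finset ℂ) (c : ℂ → ℂ) :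
    genVal 0 f Ω c = (∑ k ∈ Ω.erase (-1), c k / (k + 1))
      + (∫ r in Set.Ioo (0:ℝ) 1, (f r - ∑ k ∈ Ω, c k * ((r : ℝ) : ℂ) ^ k))
      + ∫ r in Set.Ioi (1:ℝ), f r := by
  simp [genVal]

/-- `genVal 0` does not depend on the choice of admissible data. -/
lemma genVal_indep (f : ℝ → ℂ) (Ω₁ Ω₂ : Finset ℂ) (c₁ c₂ : ℂ → ℂ)
    (h₁ : IntegrableOn (fun r : ℝ => f r - ∑ k ∈ Ω₁, c₁ k * ((r : ℝ) : ℂ) ^ k) (Set.Ioo (0:ℝ) 1))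
    (h₂ : IntegrableOn (fun r : ℝ => f r - ∑ k ∈ Ω₂, c₂ k * ((r : ℝ) : ℂ) ^ k) (Set.Ioo (0:ℝ) 1)) :
    genVal 0 f Ω₁ c₁ = genVal 0 f Ω₂ c₂ := by
  set S : Finset ℂ := Ω₁ ∪ Ω₂ with hS
  set d : ℂ → ℂ := fun k => (if k ∈ Ω₁ then c₁ k else 0) - (if k ∈ Ω₂ then c₂ k else 0) with hd
  -- pointwise identity for the difference of the two singular parts
  have hpt : ∀ r : ℝ,
      (f r - ∑ k ∈ Ω₂, c₂ k * ((r : ℝ) : ℂ) ^ k) - (f r - ∑ k ∈ Ω₁, c₁ k * ((r : ℝ) : ℂ) ^ k)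
        = ∑ k ∈ S, d k * ((r : ℝ) : ℂ) ^ k := by
    intro r
    have e1 : ∑ k ∈ Ω₁, c₁ k * ((r : ℝ) : ℂ) ^ k
        = ∑ k ∈ S, (if k ∈ Ω₁ then c₁ k else 0) * ((r : ℝ) : ℂ) ^ k := by
      rw [← Finset.sum_subset Finset.subset_union_left
        (fun k _ hk1 => by rw [if_neg hk1, zero_mul])]
      exact Finset.sum_congr rfl (fun k hk => by rw [if_pos hk])
    have e2 : ∑ k ∈ Ω₂, c₂ k * ((r : ℝ) : ℂ) ^ k
        = ∑ k ∈ S, (if k ∈ Ω₂ then c₂ k else 0) * ((r : ℝ) : ℂ) ^ k := by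
      rw [← Finset.sum_subset Finset.subset_union_right
        (fun k _ hk1 => by rw [if_neg hk1, zero_mul])]
      exact Finset.sum_congr rfl (fun k hk => by rw [if_pos hk])
    calc (f r - ∑ k ∈ Ω₂, c₂ k * ((r : ℝ) : ℂ) ^ k)
          - (f r - ∑ k ∈ Ω₁, c₁ k * ((r : ℝ) : ℂ) ^ k)
        = (∑ k ∈ S, (if k ∈ Ω₁ then c₁ k else 0) * ((r : ℝ) : ℂ) ^ k)
          - ∑ k ∈ S, (if k ∈ Ω₂ then c₂ k else 0) * ((r : ℝ) : ℂ) ^ k := by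
          rw [← e1, ← e2]; ring
      _ = ∑ k ∈ S, ((if k ∈ Ω₁ then c₁ k else 0) * ((r : ℝ) : ℂ) ^ k
          - (if k ∈ Ω₂ then c₂ k else 0) * ((r : ℝ) : ℂ) ^ k) := (Finset.sum_sub_distrib _ _).symm
      _ = ∑ k ∈ S, d k * ((r : ℝ) : ℂ) ^ k := by
          apply Finset.sum_congr rfl
          intro k _
          simp only [hd]
          ring
  have hintS : IntegrableOn (fun r : ℝ => ∑ k ∈ S, d k * ((r : ℝ) : ℂ) ^ k) (Set.Ioo (0:ℝ) 1) := by
    exact (h₂.sub h₁).congr (Filter.Eventually.of_forall fun r => hpt r)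
  have hSval := integral_monomial_sum S d hintS
  -- sum over union splits back
  have hA : ∑ k ∈ S.erase (-1), d k / (k + 1)
      = (∑ k ∈ Ω₁.erase (-1), c₁ k / (k + 1)) - ∑ k ∈ Ω₂.erase (-1), c₂ k / (k + 1) := by
    have e1 : ∑ k ∈ Ω₁.erase (-1), c₁ k / (k + 1)
        = ∑ k ∈ S.erase (-1), (if k ∈ Ω₁ then c₁ k else 0) / (k + 1) := by
      rw [← Finset.sum_subset (Finset.erase_subset_erase _ Finset.subset_union_left)
        (fun k hk hk1 => ?_)]
      · exact Finset.sum_congr rfl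
          (fun k hk => by rw [if_pos (Finset.mem_of_mem_erase hk)])
      · have : k ∉ Ω₁ := fun hc => hk1 (Finset.mem_erase.mpr ⟨Finset.ne_of_mem_erase hk, hc⟩)
        rw [if_neg this, zero_div]
    have e2 : ∑ k ∈ Ω₂.erase (-1), c₂ k / (k + 1)
        = ∑ k ∈ S.erase (-1), (if k ∈ Ω₂ then c₂ k else 0) / (k + 1) := by
      rw [← Finset.sum_subset (Finset.erase_subset_erase _ Finset.subset_union_right)
        (fun k hk hk1 => ?_)]
      · exact Finset.sum_congr rfl
          (fun k hk => by rw [if_pos (Finset.mem_of_mem_erase hk)])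
      · have : k ∉ Ω₂ := fun hc => hk1 (Finset.mem_erase.mpr ⟨Finset.ne_of_mem_erase hk, hc⟩)
        rw [if_neg this, zero_div]
    rw [e1, e2, ← Finset.sum_sub_distrib]
    apply Finset.sum_congr rfl
    intro k _
    simp only [hd]
    ring
  have hdiff : (∫ r in Set.Ioo (0:ℝ) 1, (f r - ∑ k ∈ Ω₂, c₂ k * ((r : ℝ) : ℂ) ^ k))
      - (∫ r in Set.Ioo (0:ℝ) 1, (f r - ∑ k ∈ Ω₁, c₁ k * ((r : ℝ) : ℂ) ^ k))
      = (∑ k ∈ Ω₁.erase (-1), c₁ k / (k + 1)) - ∑ k ∈ Ω₂.erase (-1), c₂ k / (k + 1) := by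
    rw [← integral_sub h₂ h₁]
    rw [← hA, ← hSval]
    apply setIntegral_congr_fun measurableSet_Ioo
    intro r _
    exact hpt r
  rw [genVal_zero, genVal_zero]
  have : (∫ r in Set.Ioo (0:ℝ) 1, (f r - ∑ k ∈ Ω₁, c₁ k * ((r : ℝ) : ℂ) ^ k))
      = (∫ r in Set.Ioo (0:ℝ) 1, (f r - ∑ k ∈ Ω₂, c₂ k * ((r : ℝ) : ℂ) ^ k))
        - ((∑ k ∈ Ω₁.erase (-1), c₁ k / (k + 1)) - ∑ k ∈ Ω₂.erase (-1), c₂ k / (k + 1)) := by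
    rw [← hdiff]; ring
  rw [this]
  ring

lemma rpow_hasDerivWithinAt (α : ℝ) (s : Set ℝ) (x : ℝ) (hx : x ≠ 0) :
    HasDerivWithinAt (fun u : ℝ => u ^ α) (α * x ^ (α - 1)) s x :=
  (Real.hasDerivAt_rpow_const (Or.inl hx)).hasDerivWithinAt

lemma rpow_injOn_pos (α : ℝ) (hα : 0 < α) : Set.InjOn (fun u : ℝ => u ^ α) (Set.Ioi 0) :=
  fun x hx y hy hxy => by
    have : StrictMonoOn (fun u : ℝ => u ^ α) (Set.Ioi 0) :=
      fun a ha b _ hab => Real.rpow_lt_rpow (le_of_lt ha) hab hα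
    exact this.injOn hx hy hxy

lemma rpow_image_Ioo (α : ℝ) (hα : 0 < α) :
    (fun u : ℝ => u ^ α) '' Set.Ioo 0 1 = Set.Ioo 0 1 := by
  ext x
  constructor
  · rintro ⟨u, hu, rfl⟩
    exact ⟨Real.rpow_pos_of_pos hu.1 _, Real.rpow_lt_one hu.1.le hu.2 hα⟩
  · intro hx
    refine ⟨x ^ (1/α), ⟨Real.rpow_pos_of_pos hx.1 _,
      Real.rpow_lt_one hx.1.le hx.2 (by positivity)⟩, ?_⟩
    simp only
    rw [← Real.rpow_mul hx.1.le, one_div_mul_cancel hα.ne', Real.rpow_one]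

lemma rpow_image_Ioi (α : ℝ) (hα : 0 < α) :
    (fun u : ℝ => u ^ α) '' Set.Ioi 1 = Set.Ioi 1 := by
  ext x
  constructor
  · rintro ⟨u, hu, rfl⟩
    exact Real.one_lt_rpow_iff_of_pos (lt_trans one_pos hu) |>.mpr (Or.inl ⟨hu, hα⟩)
  · intro hx
    have hx0 : (0:ℝ) < x := lt_trans one_pos hx
    refine ⟨x ^ (1/α), ?_, ?_⟩
    · exact Real.one_lt_rpow_iff_of_pos hx0 |>.mpr (Or.inl ⟨hx, by positivity⟩)
    · simp only
      rw [← Real.rpow_mul hx0.le, one_div_mul_cancel hα.ne', Real.rpow_one]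

lemma monomial_subst' (α : ℝ) (hα : 0 < α) (k : ℂ) (u : ℝ) (hu : 0 < u) :
    ((α * u ^ (α-1) : ℝ) : ℂ) * (((u ^ α : ℝ) : ℂ) ^ k)
      = (α:ℂ) * ((u:ℝ):ℂ) ^ ((α:ℂ)*(k+1) - 1) := by
  have huc : ((u:ℝ):ℂ) ≠ 0 := by simpa using hu.ne'
  have e1 : (((u ^ α : ℝ)) : ℂ) ^ k = ((u:ℝ):ℂ) ^ ((α:ℂ) * k) :=
    (Complex.cpow_mul_ofReal_nonneg hu.le α k).symm
  have e3 : ((u ^ (α-1) : ℝ) : ℂ) = ((u:ℝ):ℂ) ^ ((α:ℂ) - 1) := by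
    rw [Complex.ofReal_cpow hu.le]
    norm_cast
  have e4 : (α:ℂ)*(k+1) - 1 = (α:ℂ) * k + ((α:ℂ) - 1) := by ring
  rw [Complex.ofReal_mul, e1, e3, e4, Complex.cpow_add _ _ huc]
  ring

end Auxiliary

/-- Invariance of the generalized integral under the power substitution
`r = u^α`, `α > 0`: if `(Ω, c)` is admissible data for `f` and `(Ω', c')` is
admissible data for the substituted function `u ↦ f(u^α) α u^{α-1}`, then
`gen∫_0^∞ f(u^α) α u^{α-1} du = gen∫_0^∞ f(r) dr`. -/
theorem genVal_power_substitution (α : ℝ) (hα : 0 < α) (f : ℝ → ℂ)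
    (Ω Ω' : Finset ℂ) (c c' : ℂ → ℂ)
    (hf : MeasureTheory.IntegrableOn f (Set.Ioi (1 : ℝ)))
    (h0 : MeasureTheory.IntegrableOn
      (fun r => f r - ∑ k ∈ Ω, c k * ((r : ℝ) : ℂ) ^ k) (Set.Ioo (0 : ℝ) 1))
    (hg : MeasureTheory.IntegrableOn
      (fun u : ℝ => f (u ^ α) * ((α * u ^ (α - 1) : ℝ) : ℂ)) (Set.Ioi (1 : ℝ)))
    (hg0 : MeasureTheory.IntegrableOn
      (fun u : ℝ => f (u ^ α) * ((α * u ^ (α - 1) : ℝ) : ℂ)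
        - ∑ k ∈ Ω', c' k * ((u : ℝ) : ℂ) ^ k) (Set.Ioo (0 : ℝ) 1)) :
    genVal 0 (fun u : ℝ => f (u ^ α) * ((α * u ^ (α - 1) : ℝ) : ℂ)) Ω' c'
      = genVal 0 f Ω c := by
  have hαc : ((α:ℝ):ℂ) ≠ 0 := Complex.ofReal_ne_zero.mpr hα.ne'
  set g : ℝ → ℂ := fun u : ℝ => f (u ^ α) * ((α * u ^ (α - 1) : ℝ) : ℂ) with hgdef
  set τ : ℂ → ℂ := fun k => (α:ℂ) * (k + 1) - 1 with hτ
  set c'' : ℂ → ℂ := fun j => (α:ℂ) * c ((j + 1) / (α:ℂ) - 1) with hc''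
  set Ω'' : Finset ℂ := Ω.image τ with hΩ''
  have hτinj : Function.Injective τ := by
    intro a b hab
    simp only [hτ] at hab
    have := sub_left_injective hab
    have := mul_left_cancel₀ hαc this
    exact add_right_cancel this
  have hτc : ∀ k : ℂ, c'' (τ k) = (α:ℂ) * c k := by
    intro k
    simp only [hτ, hc'']
    congr 1
    rw [sub_add_cancel, mul_div_cancel_left₀ _ hαc, add_sub_cancel_right]
  have hτm1 : τ (-1) = -1 := by simp [hτ]
  -- derivative facts
  have hderivIoo : ∀ x ∈ Set.Ioo (0:ℝ) 1,
      HasDerivWithinAt (fun u : ℝ => u ^ α) (α * x ^ (α - 1)) (Set.Ioo (0:ℝ) 1) x :=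
    fun x hx => rpow_hasDerivWithinAt α _ x hx.1.ne'
  have hderivIoi : ∀ x ∈ Set.Ioi (1:ℝ),
      HasDerivWithinAt (fun u : ℝ => u ^ α) (α * x ^ (α - 1)) (Set.Ioi (1:ℝ)) x :=
    fun x hx => rpow_hasDerivWithinAt α _ x (lt_trans one_pos hx).ne'
  have hinjIoo : Set.InjOn (fun u : ℝ => u ^ α) (Set.Ioo 0 1) :=
    (rpow_injOn_pos α hα).mono (fun x hx => hx.1)
  have hinjIoi : Set.InjOn (fun u : ℝ => u ^ α) (Set.Ioi 1) :=
    (rpow_injOn_pos α hα).mono (fun x (hx : x ∈ Set.Ioi (1:ℝ)) => Set.mem_Ioi.mpr (lt_trans one_pos (Set.mem_Ioi.mp hx)))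
  -- pointwise identity on (0,1)
  have hpt : ∀ u ∈ Set.Ioo (0:ℝ) 1,
      |α * u ^ (α - 1)| • (f (u ^ α) - ∑ k ∈ Ω, c k * ((u ^ α : ℝ) : ℂ) ^ k)
        = g u - ∑ j ∈ Ω'', c'' j * ((u : ℝ) : ℂ) ^ j := by
    intro u hu
    have hu0 : (0:ℝ) < u := hu.1
    have habs : |α * u ^ (α - 1)| = α * u ^ (α - 1) := by
      apply abs_of_pos; positivity
    have hsum : ∑ j ∈ Ω'', c'' j * ((u : ℝ) : ℂ) ^ j
        = ∑ k ∈ Ω, ((α * u ^ (α-1) : ℝ) : ℂ) * (c k * ((u ^ α : ℝ) : ℂ) ^ k) := by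
      rw [hΩ'', Finset.sum_image (fun x _ y _ h => hτinj h)]
      apply Finset.sum_congr rfl
      intro k _
      rw [hτc k]
      calc (α:ℂ) * c k * ((u : ℝ) : ℂ) ^ τ k
          = c k * ((α:ℂ) * ((u : ℝ) : ℂ) ^ ((α:ℂ) * (k+1) - 1)) := by
            simp only [hτ]; ring
        _ = c k * (((α * u ^ (α-1) : ℝ) : ℂ) * (((u ^ α : ℝ) : ℂ) ^ k)) := by
            rw [monomial_subst' α hα k u hu0]
        _ = ((α * u ^ (α-1) : ℝ) : ℂ) * (c k * ((u ^ α : ℝ) : ℂ) ^ k) := by ring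
    rw [habs, Complex.real_smul, mul_sub, Finset.mul_sum, hsum, hgdef]
    ring_nf
  -- pointwise identity on (1,∞)
  have hpt' : ∀ u ∈ Set.Ioi (1:ℝ), |α * u ^ (α - 1)| • f (u ^ α) = g u := by
    intro u hu
    have hu0 : (0:ℝ) < u := lt_trans one_pos hu
    have habs : |α * u ^ (α - 1)| = α * u ^ (α - 1) := by
      apply abs_of_pos; positivity
    rw [habs, Complex.real_smul, hgdef, mul_comm]
  -- admissibility of the transported data for g
  have hadm : IntegrableOn (fun u : ℝ => g u - ∑ j ∈ Ω'', c'' j * ((u : ℝ) : ℂ) ^ j)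
      (Set.Ioo (0:ℝ) 1) := by
    have h1 := (integrableOn_image_iff_integrableOn_abs_deriv_smul measurableSet_Ioo
      hderivIoo hinjIoo (fun r : ℝ => f r - ∑ k ∈ Ω, c k * ((r : ℝ) : ℂ) ^ k)).mp
      (by rw [rpow_image_Ioo α hα]; exact h0)
    apply h1.congr_fun _ measurableSet_Ioo
    intro u hu
    exact (hpt u hu)
  -- the three component identities
  have hIoi : (∫ u in Set.Ioi (1:ℝ), g u) = ∫ r in Set.Ioi (1:ℝ), f r := by
    have h2 := integral_image_eq_integral_abs_deriv_smul measurableSet_Ioi hderivIoi hinjIoi f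
    rw [rpow_image_Ioi α hα] at h2
    rw [h2]
    exact setIntegral_congr_fun measurableSet_Ioi (fun u hu => (hpt' u hu).symm)
  have hIoo : (∫ u in Set.Ioo (0:ℝ) 1, (g u - ∑ j ∈ Ω'', c'' j * ((u:ℝ):ℂ) ^ j))
      = ∫ r in Set.Ioo (0:ℝ) 1, (f r - ∑ k ∈ Ω, c k * ((r:ℝ):ℂ) ^ k) := by
    have h2 := integral_image_eq_integral_abs_deriv_smul measurableSet_Ioo hderivIoo hinjIoo
      (fun r : ℝ => f r - ∑ k ∈ Ω, c k * ((r:ℝ):ℂ) ^ k)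
    rw [rpow_image_Ioo α hα] at h2
    rw [h2]
    exact setIntegral_congr_fun measurableSet_Ioo (fun u hu => (hpt u hu).symm)
  have hsumA : ∑ j ∈ Ω''.erase (-1), c'' j / (j+1) = ∑ k ∈ Ω.erase (-1), c k / (k+1) := by
    have himg : Ω''.erase (-1) = (Ω.erase (-1)).image τ := by
      rw [Finset.image_erase hτinj, hτm1, hΩ'']
    rw [himg, Finset.sum_image (fun x _ y _ h => hτinj h)]
    apply Finset.sum_congr rfl
    intro k hk
    rw [hτc k]
    have h3 : τ k + 1 = (α:ℂ) * (k+1) := by simp only [hτ]; ring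
    rw [h3, mul_div_mul_left _ _ hαc]
  have hBB : genVal 0 g Ω'' c'' = genVal 0 f Ω c := by
    rw [genVal_zero, genVal_zero, hsumA, hIoo, hIoi]
  have hAA : genVal 0 g Ω' c' = genVal 0 g Ω'' c'' :=
    genVal_indep g Ω' Ω'' c' c'' hg0 hadm
  exact hAA.trans hBB
end
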